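/- If G is a graph with at least one edge such that V⁻(G) = {x : γ(G−x) < γ(G)} contains a vertex cover of G, then for every pair of adjacent vertices u, v: γ(G_{u,v,1}) = γ(G_{u,v,2}) = γ(G) and γ(G_{u,v,3}) = γ(G) + 1 (i.e., epa(G) = 3). -/
import Mathlib


/-- `D` is a dominating set of `G`: every vertex not in `D` has a neighbor in `D`. -/
def isDomSet {V : Type*} (G : SimpleGraph V) (D : Finset V) : Prop :=
  ∀ v, v ∉ D → ∃ u ∈ D, G.Adj u v

/-- The domination number: minimum cardinality of a dominating set. -/
noncomputable def domNum {V : Type*} (G : SimpleGraph V) : ℕ :=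
  sInf {n | ∃ D : Finset V, D.card = n ∧ isDomSet G D}

/-- The `(u,v)`-path-addition graph `G_{u,v,k}`: add an internally disjoint path with
`k` internal vertices between `u` and `v`. -/
noncomputable def pathAdd {V : Type*} (G : SimpleGraph V) (u v : V) (k : ℕ) :
    SimpleGraph (V ⊕ Fin k) :=
  SimpleGraph.fromRel (fun a b =>
    match a, b with
    | Sum.inl x, Sum.inl y => G.Adj x y
    | Sum.inl x, Sum.inr i => (x = u ∧ (i : ℕ) = 0) ∨ (x = v ∧ (i : ℕ) = k - 1)
    | Sum.inr _, Sum.inl _ => False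
    | Sum.inr i, Sum.inr j => (j : ℕ) = (i : ℕ) + 1)

lemma domNum_le {V : Type*} (G : SimpleGraph V) (D : Finset V) (hD : isDomSet G D) :
    domNum G ≤ D.card := Nat.sInf_le ⟨D, rfl, hD⟩

lemma exists_domset {V : Type*} [Fintype V] (G : SimpleGraph V) :
    ∃ D : Finset V, D.card = domNum G ∧ isDomSet G D := by
  have hne : {n | ∃ D : Finset V, D.card = n ∧ isDomSet G D}.Nonempty :=
    ⟨(Finset.univ : Finset V).card, Finset.univ, rfl, fun w hw => absurd (Finset.mem_univ w) hw⟩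
  obtain ⟨D, hc, hd⟩ := Nat.sInf_mem hne
  exact ⟨D, hc, hd⟩

lemma pathAdd_adj_inl_inl {V : Type*} (G : SimpleGraph V) (u v : V) (k : ℕ) (x y : V) :
    (pathAdd G u v k).Adj (Sum.inl x) (Sum.inl y) ↔ G.Adj x y := by
  constructor
  · rintro ⟨-, h | h⟩
    · exact h
    · exact h.symm
  · intro h
    exact ⟨by simpa using h.ne, Or.inl h⟩

lemma pathAdd_adj_inl_inr {V : Type*} (G : SimpleGraph V) (u v : V) (k : ℕ) (x : V) (i : Fin k) :
    (pathAdd G u v k).Adj (Sum.inl x) (Sum.inr i) ↔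
      ((x = u ∧ (i : ℕ) = 0) ∨ (x = v ∧ (i : ℕ) = k - 1)) := by
  constructor
  · rintro ⟨-, h | h⟩
    · exact h
    · exact h.elim
  · intro h
    exact ⟨by simp, Or.inl h⟩

lemma pathAdd_adj_inr_inr {V : Type*} (G : SimpleGraph V) (u v : V) (k : ℕ) (i j : Fin k) :
    (pathAdd G u v k).Adj (Sum.inr i) (Sum.inr j) ↔
      (i ≠ j ∧ ((j : ℕ) = (i : ℕ) + 1 ∨ (i : ℕ) = (j : ℕ) + 1)) := by
  constructor
  · rintro ⟨hne, h | h⟩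
    · exact ⟨by simpa using hne, Or.inl h⟩
    · exact ⟨by simpa using hne, Or.inr h⟩
  · rintro ⟨hne, h | h⟩
    · exact ⟨by simpa using hne, Or.inl h⟩
    · exact ⟨by simpa using hne, Or.inr h⟩

lemma card_image_succ_le {α β : Type*} [DecidableEq α] [DecidableEq β] {S : Finset α}
    {g : α → β} {a b : α} (ha : a ∈ S) (hb : b ∈ S) (hab : a ≠ b) (h : g a = g b) :
    (S.image g).card + 1 ≤ S.card := by
  have heq : S.image g = (S.erase a).image g := by
    apply Finset.Subset.antisymm
    · intro y hy
      obtain ⟨c, hc, rfl⟩ := Finset.mem_image.1 hy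
      by_cases hca : c = a
      · subst hca
        rw [h]
        exact Finset.mem_image_of_mem g (Finset.mem_erase.2 ⟨fun hba => hab hba.symm, hb⟩)
      · exact Finset.mem_image_of_mem g (Finset.mem_erase.2 ⟨hca, hc⟩)
    · exact Finset.image_subset_image (Finset.erase_subset a S)
  rw [heq]
  have h1 := Finset.card_image_le (s := S.erase a) (f := g)
  have h2 := Finset.card_erase_add_one ha
  omega

lemma pathAdd_lb {V : Type*} [Fintype V] (G : SimpleGraph V) {u v : V} (huv : G.Adj u v)
    (k : ℕ) : domNum G ≤ domNum (pathAdd G u v k) := by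
  classical
  obtain ⟨S, hcard, hdom⟩ := exists_domset (pathAdd G u v k)
  set g : V ⊕ Fin k → V := Sum.elim id (fun i => if (i : ℕ) = 0 then v else u) with hg
  have hD : isDomSet G (S.image g) := by
    intro x hx
    have hxS : Sum.inl x ∉ S := fun h => hx (Finset.mem_image_of_mem g h)
    obtain ⟨s, hs, hadj⟩ := hdom _ hxS
    rcases s with y | i
    · exact ⟨y, Finset.mem_image_of_mem g hs, (pathAdd_adj_inl_inl G u v k y x).1 hadj⟩
    · have h := (pathAdd_adj_inl_inr G u v k x i).1 hadj.symm
      rcases h with ⟨hxu, hi0⟩ | ⟨hxv, hik⟩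
      · refine ⟨g (Sum.inr i), Finset.mem_image_of_mem g hs, ?_⟩
        have hgv : g (Sum.inr i) = v := by simp [hg, hi0]
        rw [hgv, hxu]; exact huv.symm
      · by_cases hi0 : (i : ℕ) = 0
        · exfalso
          apply hx
          have hgv : g (Sum.inr i) = v := by simp [hg, hi0]
          rw [hxv, ← hgv]
          exact Finset.mem_image_of_mem g hs
        · refine ⟨g (Sum.inr i), Finset.mem_image_of_mem g hs, ?_⟩
          have hgu : g (Sum.inr i) = u := by simp [hg, hi0]
          rw [hgu, hxv]; exact huv
  calc domNum G ≤ (S.image g).card := domNum_le _ _ hD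
    _ ≤ S.card := Finset.card_image_le
    _ = domNum (pathAdd G u v k) := hcard

lemma exists_del {V : Type*} [Fintype V] (G : SimpleGraph V) (x : V)
    (h : domNum (G.induce {w | w ≠ x}) < domNum G) :
    ∃ D' : Finset V, (∀ y ∈ D', y ≠ x) ∧ D'.card < domNum G ∧
      ∀ w, w ≠ x → w ∉ D' → ∃ y ∈ D', G.Adj y w := by
  classical
  haveI : Fintype ↥{w : V | w ≠ x} := Fintype.ofFinite _
  obtain ⟨D0, hc, hd⟩ := exists_domset (G.induce {w | w ≠ x})
  refine ⟨D0.image Subtype.val, ?_, ?_, ?_⟩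
  · rintro y hy
    obtain ⟨⟨z, hz⟩, _, rfl⟩ := Finset.mem_image.1 hy
    exact hz
  · rw [Finset.card_image_of_injective _ Subtype.val_injective, hc]
    exact h
  · intro w hw hwD
    have hmem : (⟨w, hw⟩ : ↥{w : V | w ≠ x}) ∉ D0 :=
      fun hmem => hwD (Finset.mem_image_of_mem _ hmem)
    obtain ⟨z, hz, hadj⟩ := hd _ hmem
    exact ⟨z.val, Finset.mem_image_of_mem _ hz, hadj⟩

lemma pathAdd_lb3 {V : Type*} [Fintype V] (G : SimpleGraph V) {u v : V} (huv : G.Adj u v) :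
    domNum G + 1 ≤ domNum (pathAdd G u v 3) := by
  classical
  obtain ⟨S, hScard, hSdom⟩ := exists_domset (pathAdd G u v 3)
  rw [← hScard]
  by_contra hcon
  push_neg at hcon
  have hle : S.card ≤ domNum G := by omega
  suffices hD : ∃ D : Finset V, isDomSet G D ∧ D.card + 1 ≤ S.card by
    obtain ⟨D, hDdom, hDc⟩ := hD
    have := domNum_le G D hDdom
    omega
  have hnadj1 : ∀ x : V, ¬ (pathAdd G u v 3).Adj (Sum.inl x) (Sum.inr 1) := by
    intro x h
    rcases (pathAdd_adj_inl_inr G u v 3 x 1).1 h with ⟨-, h'⟩ | ⟨-, h'⟩ <;> simp at h'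
  set gu : V ⊕ Fin 3 → V := Sum.elim id (fun _ => u) with hgu
  set gv : V ⊕ Fin 3 → V := Sum.elim id (fun _ => v) with hgv
  by_cases h0 : (Sum.inr 0 : V ⊕ Fin 3) ∈ S
  · by_cases h2 : (Sum.inr 2 : V ⊕ Fin 3) ∈ S
    · -- case 1 : w0, w2 ∈ S
      refine ⟨S.image gu, ?_, card_image_succ_le h0 h2 (by simp) rfl⟩
      intro x hx
      have hxu : x ≠ u := fun hh => hx (hh ▸ Finset.mem_image_of_mem gu h0)
      have hxS : Sum.inl x ∉ S := fun h => hx (Finset.mem_image_of_mem gu h)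
      obtain ⟨s, hs, hadj⟩ := hSdom _ hxS
      rcases s with y | i
      · exact ⟨y, Finset.mem_image_of_mem gu hs, (pathAdd_adj_inl_inl G u v 3 y x).1 hadj⟩
      · have h := (pathAdd_adj_inl_inr G u v 3 x i).1 hadj.symm
        rcases h with ⟨hxu', -⟩ | ⟨hxv, -⟩
        · exact absurd hxu' hxu
        · exact ⟨u, Finset.mem_image_of_mem gu h0, hxv ▸ huv⟩
    · by_cases h1 : (Sum.inr 1 : V ⊕ Fin 3) ∈ S
      · -- case 2 : w0, w1 ∈ S, w2 ∉ S
        refine ⟨S.image gu, ?_, card_image_succ_le h0 h1 (by simp) rfl⟩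
        intro x hx
        have hxu : x ≠ u := fun hh => hx (hh ▸ Finset.mem_image_of_mem gu h0)
        have hxS : Sum.inl x ∉ S := fun h => hx (Finset.mem_image_of_mem gu h)
        obtain ⟨s, hs, hadj⟩ := hSdom _ hxS
        rcases s with y | i
        · exact ⟨y, Finset.mem_image_of_mem gu hs, (pathAdd_adj_inl_inl G u v 3 y x).1 hadj⟩
        · have h := (pathAdd_adj_inl_inr G u v 3 x i).1 hadj.symm
          rcases h with ⟨hxu', -⟩ | ⟨hxv, hi2⟩
          · exact absurd hxu' hxu
          · have : i = 2 := by omega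
            subst this
            exact absurd hs h2
      · -- case 3 : w0 ∈ S, w1 w2 ∉ S  ⇒ inl v ∈ S
        have hvS : Sum.inl v ∈ S := by
          obtain ⟨s, hs, hadj⟩ := hSdom (Sum.inr 2) h2
          rcases s with y | i
          · rcases (pathAdd_adj_inl_inr G u v 3 y 2).1 hadj with ⟨-, h'⟩ | ⟨rfl, -⟩
            · simp at h'
            · exact hs
          · exfalso
            have h := (pathAdd_adj_inr_inr G u v 3 i 2).1 hadj
            fin_cases i
            · rcases h with ⟨-, h' | h'⟩ <;> simp at h'
            · exact h1 hs
            · exact absurd rfl h.1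
        refine ⟨S.image gv, ?_, card_image_succ_le h0 hvS (by simp) rfl⟩
        intro x hx
        have hxv : x ≠ v := fun hh => hx (hh ▸ Finset.mem_image_of_mem gv hvS)
        have hxS : Sum.inl x ∉ S := fun h => hx (Finset.mem_image_of_mem gv h)
        obtain ⟨s, hs, hadj⟩ := hSdom _ hxS
        rcases s with y | i
        · exact ⟨y, Finset.mem_image_of_mem gv hs, (pathAdd_adj_inl_inl G u v 3 y x).1 hadj⟩
        · have h := (pathAdd_adj_inl_inr G u v 3 x i).1 hadj.symm
          rcases h with ⟨hxu', hi0⟩ | ⟨hxv', -⟩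
          · refine ⟨v, Finset.mem_image_of_mem gv h0, hxu' ▸ huv.symm⟩
          · exact absurd hxv' hxv
  · by_cases h1 : (Sum.inr 1 : V ⊕ Fin 3) ∈ S
    · by_cases h2 : (Sum.inr 2 : V ⊕ Fin 3) ∈ S
      · -- case 4 : w1, w2 ∈ S, w0 ∉ S
        refine ⟨S.image gu, ?_, card_image_succ_le h1 h2 (by simp) rfl⟩
        intro x hx
        have hxu : x ≠ u := fun hh => hx (hh ▸ Finset.mem_image_of_mem gu h1)
        have hxS : Sum.inl x ∉ S := fun h => hx (Finset.mem_image_of_mem gu h)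
        obtain ⟨s, hs, hadj⟩ := hSdom _ hxS
        rcases s with y | i
        · exact ⟨y, Finset.mem_image_of_mem gu hs, (pathAdd_adj_inl_inl G u v 3 y x).1 hadj⟩
        · have h := (pathAdd_adj_inl_inr G u v 3 x i).1 hadj.symm
          rcases h with ⟨hxu', -⟩ | ⟨hxv, -⟩
          · exact absurd hxu' hxu
          · exact ⟨u, Finset.mem_image_of_mem gu h1, hxv ▸ huv⟩
      · -- case 5 : only w1 ∈ S
        refine ⟨(S.erase (Sum.inr 1)).image gu, ?_, ?_⟩
        · intro x hx
          have hxS : Sum.inl x ∉ S := by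
            intro h
            exact hx (Finset.mem_image_of_mem gu (Finset.mem_erase.2 ⟨by simp, h⟩))
          obtain ⟨s, hs, hadj⟩ := hSdom _ hxS
          rcases s with y | i
          · refine ⟨y, Finset.mem_image_of_mem gu (Finset.mem_erase.2 ⟨by simp, hs⟩),
              (pathAdd_adj_inl_inl G u v 3 y x).1 hadj⟩
          · exfalso
            have h := (pathAdd_adj_inl_inr G u v 3 x i).1 hadj.symm
            rcases h with ⟨-, hi0⟩ | ⟨-, hi2⟩
            · have : i = 0 := by omega
              subst this; exact h0 hs
            · have : i = 2 := by omega
              subst this; exact h2 hs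
        · have ha := Finset.card_image_le (s := S.erase (Sum.inr 1)) (f := gu)
          have hb := Finset.card_erase_add_one h1
          omega
    · by_cases h2 : (Sum.inr 2 : V ⊕ Fin 3) ∈ S
      · -- case 6 : only w2 ∈ S ⇒ inl u ∈ S
        have huS : Sum.inl u ∈ S := by
          obtain ⟨s, hs, hadj⟩ := hSdom (Sum.inr 0) h0
          rcases s with y | i
          · rcases (pathAdd_adj_inl_inr G u v 3 y 0).1 hadj with ⟨rfl, -⟩ | ⟨-, h'⟩
            · exact hs
            · simp at h'
          · exfalso
            have h := (pathAdd_adj_inr_inr G u v 3 i 0).1 hadj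
            fin_cases i
            · exact absurd rfl h.1
            · exact h1 hs
            · rcases h with ⟨-, h' | h'⟩ <;> simp at h'
        refine ⟨S.image gu, ?_, card_image_succ_le h2 huS (by simp) rfl⟩
        intro x hx
        have hxu : x ≠ u := fun hh => hx (hh ▸ Finset.mem_image_of_mem gu huS)
        have hxS : Sum.inl x ∉ S := fun h => hx (Finset.mem_image_of_mem gu h)
        obtain ⟨s, hs, hadj⟩ := hSdom _ hxS
        rcases s with y | i
        · exact ⟨y, Finset.mem_image_of_mem gu hs, (pathAdd_adj_inl_inl G u v 3 y x).1 hadj⟩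
        · have h := (pathAdd_adj_inl_inr G u v 3 x i).1 hadj.symm
          rcases h with ⟨hxu', -⟩ | ⟨hxv, -⟩
          · exact absurd hxu' hxu
          · exact ⟨u, Finset.mem_image_of_mem gu h2, hxv ▸ huv⟩
      · -- case 7 : none ⇒ w1 undominated
        exfalso
        obtain ⟨s, hs, hadj⟩ := hSdom (Sum.inr 1) h1
        rcases s with y | i
        · exact hnadj1 y hadj
        · have h := (pathAdd_adj_inr_inr G u v 3 i 1).1 hadj
          fin_cases i
          · exact h0 hs
          · exact absurd rfl h.1
          · exact h2 hs

theorem stmt12 {V : Type*} [Fintype V] (G : SimpleGraph V) (hE : ∃ a b, G.Adj a b)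
    (C : Finset V) (hcov : ∀ a b, G.Adj a b → a ∈ C ∨ b ∈ C)
    (hC : ∀ x ∈ C, domNum (G.induce {w | w ≠ x}) < domNum G) :
    ∀ u v, G.Adj u v →
      domNum (pathAdd G u v 1) = domNum G ∧
      domNum (pathAdd G u v 2) = domNum G ∧
      domNum (pathAdd G u v 3) = domNum G + 1 := by
  classical
  intro u v huv
  obtain ⟨x, hxuv, hxC⟩ : ∃ x, (x = u ∨ x = v) ∧ x ∈ C := by
    rcases hcov u v huv with h | h
    exacts [⟨u, Or.inl rfl, h⟩, ⟨v, Or.inr rfl, h⟩]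
  obtain ⟨D', hDx, hDcard, hDdom⟩ := exists_del G x (hC x hxC)
  have hUB1 : domNum (pathAdd G u v 1) ≤ domNum G := by
    have hdom : isDomSet (pathAdd G u v 1) ((insert x D').image Sum.inl) := by
      rintro (w | i) hw
      · have hwmem : w ∉ insert x D' := fun h => hw (Finset.mem_image_of_mem _ h)
        have hwx : w ≠ x := fun h => hwmem (h ▸ Finset.mem_insert_self x D')
        obtain ⟨y, hy, hadj⟩ := hDdom w hwx (fun h => hwmem (Finset.mem_insert_of_mem h))
        exact ⟨Sum.inl y, Finset.mem_image_of_mem _ (Finset.mem_insert_of_mem hy),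
          (pathAdd_adj_inl_inl G u v 1 y w).2 hadj⟩
      · refine ⟨Sum.inl x, Finset.mem_image_of_mem _ (Finset.mem_insert_self x D'), ?_⟩
        rw [pathAdd_adj_inl_inr]
        have hi : (i : ℕ) = 0 := by have := i.isLt; omega
        rcases hxuv with rfl | rfl
        · exact Or.inl ⟨rfl, hi⟩
        · exact Or.inr ⟨rfl, by omega⟩
    have hc1 := Finset.card_image_le (s := insert x D') (f := Sum.inl (β := Fin 1))
    have hc2 := Finset.card_insert_le x D'
    have := domNum_le _ _ hdom
    omega
  have hUB2 : domNum (pathAdd G u v 2) ≤ domNum G := by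
    rcases hxuv with rfl | rfl
    · -- x = u
      have hdom : isDomSet (pathAdd G x v 2)
          (D'.image Sum.inl ∪ {(Sum.inr 0 : V ⊕ Fin 2)}) := by
        rintro (w | i) hw
        · by_cases hwu : w = x
          · subst hwu
            refine ⟨Sum.inr 0, Finset.mem_union_right _ (Finset.mem_singleton_self _), ?_⟩
            exact ((pathAdd_adj_inl_inr G w v 2 w 0).2 (Or.inl ⟨rfl, rfl⟩)).symm
          · have hwD : w ∉ D' := fun h => hw (Finset.mem_union_left _ (Finset.mem_image_of_mem _ h))
            obtain ⟨y, hy, hadj⟩ := hDdom w hwu hwD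
            exact ⟨Sum.inl y, Finset.mem_union_left _ (Finset.mem_image_of_mem _ hy),
              (pathAdd_adj_inl_inl G x v 2 y w).2 hadj⟩
        · fin_cases i
          · exact absurd (Finset.mem_union_right _ (Finset.mem_singleton_self _)) hw
          · refine ⟨Sum.inr 0, Finset.mem_union_right _ (Finset.mem_singleton_self _), ?_⟩
            exact (pathAdd_adj_inr_inr G x v 2 0 1).2 ⟨by decide, Or.inl rfl⟩
      have hc1 := Finset.card_union_le (D'.image Sum.inl) ({(Sum.inr 0 : V ⊕ Fin 2)})
      have hc2 := Finset.card_image_le (s := D') (f := Sum.inl (β := Fin 2))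
      have hc3 : ({(Sum.inr 0 : V ⊕ Fin 2)} : Finset (V ⊕ Fin 2)).card = 1 := Finset.card_singleton _
      have := domNum_le _ _ hdom
      omega
    · -- x = v
      have hdom : isDomSet (pathAdd G u x 2)
          (D'.image Sum.inl ∪ {(Sum.inr 1 : V ⊕ Fin 2)}) := by
        rintro (w | i) hw
        · by_cases hwv : w = x
          · subst hwv
            refine ⟨Sum.inr 1, Finset.mem_union_right _ (Finset.mem_singleton_self _), ?_⟩
            exact ((pathAdd_adj_inl_inr G u w 2 w 1).2 (Or.inr ⟨rfl, rfl⟩)).symm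
          · have hwD : w ∉ D' := fun h => hw (Finset.mem_union_left _ (Finset.mem_image_of_mem _ h))
            obtain ⟨y, hy, hadj⟩ := hDdom w hwv hwD
            exact ⟨Sum.inl y, Finset.mem_union_left _ (Finset.mem_image_of_mem _ hy),
              (pathAdd_adj_inl_inl G u x 2 y w).2 hadj⟩
        · fin_cases i
          · refine ⟨Sum.inr 1, Finset.mem_union_right _ (Finset.mem_singleton_self _), ?_⟩
            exact (pathAdd_adj_inr_inr G u x 2 1 0).2 ⟨by decide, Or.inr rfl⟩
          · exact absurd (Finset.mem_union_right _ (Finset.mem_singleton_self _)) hw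
      have hc1 := Finset.card_union_le (D'.image Sum.inl) ({(Sum.inr 1 : V ⊕ Fin 2)})
      have hc2 := Finset.card_image_le (s := D') (f := Sum.inl (β := Fin 2))
      have hc3 : ({(Sum.inr 1 : V ⊕ Fin 2)} : Finset (V ⊕ Fin 2)).card = 1 := Finset.card_singleton _
      have := domNum_le _ _ hdom
      omega
  have hUB3 : domNum (pathAdd G u v 3) ≤ domNum G + 1 := by
    obtain ⟨D0, hD0c, hD0d⟩ := exists_domset G
    have hdom : isDomSet (pathAdd G u v 3)
        (D0.image Sum.inl ∪ {(Sum.inr 1 : V ⊕ Fin 3)}) := by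
      rintro (w | i) hw
      · have hwD : w ∉ D0 := fun h => hw (Finset.mem_union_left _ (Finset.mem_image_of_mem _ h))
        obtain ⟨y, hy, hadj⟩ := hD0d w hwD
        exact ⟨Sum.inl y, Finset.mem_union_left _ (Finset.mem_image_of_mem _ hy),
          (pathAdd_adj_inl_inl G u v 3 y w).2 hadj⟩
      · fin_cases i
        · refine ⟨Sum.inr 1, Finset.mem_union_right _ (Finset.mem_singleton_self _), ?_⟩
          exact (pathAdd_adj_inr_inr G u v 3 1 0).2 ⟨by decide, Or.inr rfl⟩
        · exact absurd (Finset.mem_union_right _ (Finset.mem_singleton_self _)) hw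
        · refine ⟨Sum.inr 1, Finset.mem_union_right _ (Finset.mem_singleton_self _), ?_⟩
          exact (pathAdd_adj_inr_inr G u v 3 1 2).2 ⟨by decide, Or.inl rfl⟩
    have hc1 := Finset.card_union_le (D0.image Sum.inl) ({(Sum.inr 1 : V ⊕ Fin 3)})
    have hc2 := Finset.card_image_le (s := D0) (f := Sum.inl (β := Fin 3))
    have hc3 : ({(Sum.inr 1 : V ⊕ Fin 3)} : Finset (V ⊕ Fin 3)).card = 1 := Finset.card_singleton _
    have := domNum_le _ _ hdom
    omega
  exact ⟨le_antisymm hUB1 (pathAdd_lb G huv 1),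
    le_antisymm hUB2 (pathAdd_lb G huv 2),
    le_antisymm hUB3 (pathAdd_lb3 G huv)⟩
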